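/- arXiv:2206.07250 — 3 statements merged into one kernel-verified Lean document; each statement's English description precedes it below -/
import Mathlib

section
/- Let X ⊂ ℝ^d be a centrally symmetric convex body, let q ≥ 1/κ(X), and set δ = √(1 + 1/q²) − 1. Let E_q be the collection of all origin-centered ellipsoids 𝓔 with X ⊆ 𝓔 and aspect ratio of 𝓔 at most q·κ(X), and let 𝓐_q = ⋂_{𝓔 ∈ E_q} 𝓔. Then (1/(1+δ)) · 𝓐_q ⊆ X ⊆ 𝓐_q. -/
noncomputable section

open scoped Pointwise

/-- `A x`, viewed as a vector in Euclidean space. -/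
def mulVecE {d : ℕ} (A : Matrix (Fin d) (Fin d) ℝ) (x : EuclideanSpace ℝ (Fin d)) :
    EuclideanSpace ℝ (Fin d) :=
  WithLp.toLp 2 (A.mulVec x)

/-- The origin-centered ellipsoid determined by a matrix `A`. -/
def Ellip {d : ℕ} (A : Matrix (Fin d) (Fin d) ℝ) : Set (EuclideanSpace ℝ (Fin d)) :=
  {x | ‖mulVecE A x‖ ≤ 1}

/-- The largest singular value (= Euclidean operator norm) of a matrix. -/
def sMax {d : ℕ} (A : Matrix (Fin d) (Fin d) ℝ) : ℝ :=
  ‖Matrix.toEuclideanCLM (𝕜 := ℝ) A‖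

/-- The smallest singular value of a nonsingular matrix. -/
def sMin {d : ℕ} (A : Matrix (Fin d) (Fin d) ℝ) : ℝ :=
  (sMax A⁻¹)⁻¹

/-- Condition number (= aspect ratio of the ellipsoid `Ellip A`). -/
def condNum {d : ℕ} (A : Matrix (Fin d) (Fin d) ℝ) : ℝ :=
  sMax A / sMin A

/-! If `y = (1 + δ)⁻¹ • a` with `a ∈ 𝓐_q` lay outside `X`, separate it from `X` by a unit vector
`u` and let `h = max_{x ∈ X} ⟪u, x⟫`, so that `r ≤ h ≤ R`. The ellipsoid with semi-axis
`(1 + δ) h` along `u` and `(1 + δ) max h (q R)` orthogonally to `u` contains `X` because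
`1 / q² + 1 = (1 + δ)²`, and its aspect ratio is at most `q R / r`. Hence it contains `a`,
which forces `⟪u, a⟫ ≤ (1 + δ) h < (1 + δ) ⟪u, y⟫ = ⟪u, a⟫`. -/

open scoped RealInnerProductSpace

section AxialScaling

variable {E : Type*} [NormedAddCommGroup E] [InnerProductSpace ℝ E] {u : E}

/-- For a unit vector `u`, the scaling by `b` along `u` and by `a` orthogonally to `u`. -/
def axialScaling (u : E) (a b : ℝ) : E →L[ℝ] E :=
  a • ContinuousLinearMap.id ℝ E + (b - a) • (innerSL ℝ u).smulRight u

theorem axialScaling_apply (u : E) (a b : ℝ) (x : E) :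
    axialScaling u a b x = a • x + ((b - a) * ⟪u, x⟫) • u := by
  simp [axialScaling, mul_smul]

theorem axialScaling_one_one (u : E) : axialScaling u 1 1 = 1 := by
  ext x
  simp [axialScaling_apply]

theorem axialScaling_mul (hu : ‖u‖ = 1) (a b a' b' : ℝ) :
    axialScaling u a b * axialScaling u a' b' = axialScaling u (a * a') (b * b') := by
  have huu : ⟪u, u⟫ = 1 := by rw [real_inner_self_eq_norm_sq, hu, one_pow]
  ext x
  simp only [mul_apply_eq_comp, axialScaling_apply, inner_add_right,
    real_inner_smul_right, huu]
  module

theorem norm_axialScaling_apply_sq (hu : ‖u‖ = 1) (a b : ℝ) (x : E) :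
    ‖axialScaling u a b x‖ ^ 2 = a ^ 2 * (‖x‖ ^ 2 - ⟪u, x⟫ ^ 2) + b ^ 2 * ⟪u, x⟫ ^ 2 := by
  have huu : ⟪u, u⟫ = 1 := by rw [real_inner_self_eq_norm_sq, hu, one_pow]
  rw [axialScaling_apply, ← real_inner_self_eq_norm_sq, ← real_inner_self_eq_norm_sq]
  simp only [inner_add_left, inner_add_right, real_inner_smul_left, real_inner_smul_right, huu,
    real_inner_comm x u]
  ring

theorem inner_sq_le_norm_sq (hu : ‖u‖ = 1) (x : E) : ⟪u, x⟫ ^ 2 ≤ ‖x‖ ^ 2 := by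
  simpa [hu] using sq_le_sq' (neg_le_of_abs_le (abs_real_inner_le_norm u x))
    (le_of_abs_le (abs_real_inner_le_norm u x))

theorem norm_axialScaling_le (hu : ‖u‖ = 1) (a b : ℝ) : ‖axialScaling u a b‖ ≤ max |a| |b| := by
  refine ContinuousLinearMap.opNorm_le_bound _ (le_max_of_le_left (abs_nonneg a)) fun x => ?_
  have ha : a ^ 2 ≤ max |a| |b| ^ 2 := by rw [← sq_abs]; gcongr; exact le_max_left _ _
  have hb : b ^ 2 ≤ max |a| |b| ^ 2 := by rw [← sq_abs b]; gcongr; exact le_max_right _ _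
  have hux := inner_sq_le_norm_sq hu x
  rw [← sq_le_sq₀ (norm_nonneg _) (by positivity), norm_axialScaling_apply_sq hu, mul_pow]
  nlinarith [sub_nonneg.2 hux, sq_nonneg ⟪u, x⟫]

end AxialScaling

section AxialMatrix

variable {d : ℕ} {u : EuclideanSpace ℝ (Fin d)} {a b : ℝ}

def axialMatrix (u : EuclideanSpace ℝ (Fin d)) (a b : ℝ) : Matrix (Fin d) (Fin d) ℝ :=
  (Matrix.toEuclideanCLM (𝕜 := ℝ) (n := Fin d)).symm (axialScaling u a b)

theorem toEuclideanCLM_axialMatrix (u : EuclideanSpace ℝ (Fin d)) (a b : ℝ) :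
    Matrix.toEuclideanCLM (𝕜 := ℝ) (axialMatrix u a b) = axialScaling u a b :=
  StarAlgEquiv.apply_symm_apply _ _

theorem mulVecE_axialMatrix (u : EuclideanSpace ℝ (Fin d)) (a b : ℝ)
    (x : EuclideanSpace ℝ (Fin d)) :
    mulVecE (axialMatrix u a b) x = axialScaling u a b x := by
  rw [← toEuclideanCLM_axialMatrix]
  rfl

theorem axialMatrix_mul (hu : ‖u‖ = 1) (a b a' b' : ℝ) :
    axialMatrix u a b * axialMatrix u a' b' = axialMatrix u (a * a') (b * b') := by
  rw [axialMatrix, axialMatrix, ← map_mul, axialScaling_mul hu]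
  rfl

theorem axialMatrix_mul_inv (hu : ‖u‖ = 1) (ha : a ≠ 0) (hb : b ≠ 0) :
    axialMatrix u a b * axialMatrix u a⁻¹ b⁻¹ = 1 := by
  rw [axialMatrix_mul hu, mul_inv_cancel₀ ha, mul_inv_cancel₀ hb, axialMatrix,
    axialScaling_one_one, map_one]

theorem det_axialMatrix_ne_zero (hu : ‖u‖ = 1) (ha : a ≠ 0) (hb : b ≠ 0) :
    (axialMatrix u a b).det ≠ 0 :=
  (Matrix.isUnit_det_of_right_inverse (axialMatrix_mul_inv hu ha hb)).ne_zero

theorem sMax_axialMatrix_le (hu : ‖u‖ = 1) (a b : ℝ) :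
    sMax (axialMatrix u a b) ≤ max |a| |b| := by
  rw [sMax, toEuclideanCLM_axialMatrix]
  exact norm_axialScaling_le hu a b

theorem condNum_axialMatrix_le (hu : ‖u‖ = 1) (ha : 0 < a) (hab : a ≤ b) :
    condNum (axialMatrix u a b) ≤ b / a := by
  have hb : 0 < b := ha.trans_le hab
  rw [condNum, sMin, Matrix.inv_eq_right_inv (axialMatrix_mul_inv hu ha.ne' hb.ne'),
    div_inv_eq_mul, div_eq_mul_inv]
  have hmax : max |a| |b| = b := by
    rw [abs_of_pos ha, abs_of_pos hb, max_eq_right hab]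
  have hmax_inv : max |a⁻¹| |b⁻¹| = a⁻¹ := by
    rw [abs_of_pos (inv_pos.2 ha), abs_of_pos (inv_pos.2 hb),
      max_eq_left (inv_anti₀ ha hab)]
  calc sMax (axialMatrix u a b) * sMax (axialMatrix u a⁻¹ b⁻¹) ≤ max |a| |b| * max |a⁻¹| |b⁻¹| :=
        mul_le_mul (sMax_axialMatrix_le hu a b) (sMax_axialMatrix_le hu _ _)
          (norm_nonneg _) (le_max_of_le_left (abs_nonneg _))
    _ = b * a⁻¹ := by rw [hmax, hmax_inv]

theorem mem_ellip_axialMatrix_iff (hu : ‖u‖ = 1) {x : EuclideanSpace ℝ (Fin d)} :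
    x ∈ Ellip (axialMatrix u a b) ↔ a ^ 2 * (‖x‖ ^ 2 - ⟪u, x⟫ ^ 2) + b ^ 2 * ⟪u, x⟫ ^ 2 ≤ 1 := by
  rw [Ellip, Set.mem_ofPred_eq, mulVecE_axialMatrix, ← norm_axialScaling_apply_sq hu,
    sq_le_one_iff₀ (norm_nonneg _)]

theorem inner_le_of_mem_ellip_axialMatrix (hu : ‖u‖ = 1) (hb : 0 < b)
    {x : EuclideanSpace ℝ (Fin d)} (hx : x ∈ Ellip (axialMatrix u a b)) : ⟪u, x⟫ ≤ b⁻¹ := by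
  rw [mem_ellip_axialMatrix_iff hu] at hx
  have hbx : (b * ⟪u, x⟫) ^ 2 ≤ 1 := by
    nlinarith [mul_nonneg (sq_nonneg a) (sub_nonneg.2 (inner_sq_le_norm_sq hu x))]
  calc ⟪u, x⟫ = b⁻¹ * (b * ⟪u, x⟫) := by field_simp
    _ ≤ b⁻¹ := mul_le_of_le_one_right (inv_nonneg.2 hb.le)
      (le_of_abs_le ((sq_le_one_iff_abs_le_one _).1 hbx))

theorem subset_ellip_axialMatrix (hu : ‖u‖ = 1) {R h : ℝ}
    {X : Set (EuclideanSpace ℝ (Fin d))} (hX : ∀ x ∈ X, ‖x‖ ≤ R ∧ |⟪u, x⟫| ≤ h)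
    (hRh : a ^ 2 * R ^ 2 + b ^ 2 * h ^ 2 ≤ 1) : X ⊆ Ellip (axialMatrix u a b) := by
  intro x hx
  obtain ⟨hxR, hxh⟩ := hX x hx
  rw [mem_ellip_axialMatrix_iff hu]
  have hR : ‖x‖ ^ 2 ≤ R ^ 2 := pow_le_pow_left₀ (norm_nonneg x) hxR 2
  have hh : ⟪u, x⟫ ^ 2 ≤ h ^ 2 := sq_le_sq' (neg_le_of_abs_le hxh) (le_of_abs_le hxh)
  nlinarith [mul_le_mul_of_nonneg_left hR (sq_nonneg a), mul_le_mul_of_nonneg_left hh (sq_nonneg b),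
    mul_nonneg (sq_nonneg a) (sq_nonneg ⟪u, x⟫)]

end AxialMatrix

theorem zero_mem_interior_of_neg_eq {E : Type*} [AddCommGroup E] [Module ℝ E] [TopologicalSpace E]
    [IsTopologicalAddGroup E] [ContinuousSMul ℝ E] {X : Set E} (hconv : Convex ℝ X)
    (hsymm : X = -X) (hint : (interior X).Nonempty) : 0 ∈ interior X := by
  obtain ⟨x, hx⟩ := hint
  have hx' : -x ∈ interior X := by
    rw [hsymm, show -X = Homeomorph.neg E ⁻¹' X from rfl, ← Homeomorph.preimage_interior]
    simpa using hx
  simpa using hconv.interior.midpoint_mem hx hx'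

section InnerProductSpace

variable {E : Type*} [NormedAddCommGroup E] [InnerProductSpace ℝ E]

theorem exists_unit_isMaxOn_inner_lt [CompleteSpace E] {X : Set E} {y : E} (hcomp : IsCompact X)
    (hconv : Convex ℝ X) (hne : X.Nonempty) (hy : y ∉ X) :
    ∃ u : E, ‖u‖ = 1 ∧ ∃ x₀ ∈ X, IsMaxOn (⟪u, ·⟫) X x₀ ∧ ⟪u, x₀⟫ < ⟪u, y⟫ := by
  obtain ⟨f, c, hfX, hfy⟩ := geometric_hahn_banach_closed_point hconv hcomp.isClosed hy
  set v := (InnerProductSpace.toDual ℝ E).symm f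
  have hvf : ∀ x, ⟪v, x⟫ = f x := fun x => InnerProductSpace.toDual_symm_apply
  obtain ⟨x₀, hx₀, hmax⟩ :=
    hcomp.exists_isMaxOn hne (continuous_const.inner continuous_id).continuousOn (f := (⟪v, ·⟫))
  have hlt : ⟪v, x₀⟫ < ⟪v, y⟫ := by rw [hvf, hvf]; exact (hfX x₀ hx₀).trans hfy
  have hv : v ≠ 0 := by rintro hv; simp [hv] at hlt
  have hv' : 0 < ‖v‖⁻¹ := by positivity
  refine ⟨‖v‖⁻¹ • v, norm_smul_inv_norm hv, x₀, hx₀, fun x hx => ?_, ?_⟩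
  · simpa only [Set.mem_ofPred_eq, real_inner_smul_left] using
      mul_le_mul_of_nonneg_left (hmax hx) hv'.le
  · simpa only [real_inner_smul_left] using mul_lt_mul_of_pos_left hlt hv'

theorem abs_inner_le_of_isMaxOn {X : Set E} {u x₀ x : E} (hsymm : X = -X)
    (hmax : IsMaxOn (⟪u, ·⟫) X x₀) (hx : x ∈ X) : |⟪u, x⟫| ≤ ⟪u, x₀⟫ := by
  have hneg : ⟪u, -x⟫ ≤ ⟪u, x₀⟫ := hmax (by rw [hsymm]; simpa using hx)
  rw [inner_neg_right] at hneg
  exact abs_le.2 ⟨by linarith, hmax hx⟩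

end InnerProductSpace

theorem exists_ellip_subset_halfspace {d : ℕ} {X : Set (EuclideanSpace ℝ (Fin d))}
    {u : EuclideanSpace ℝ (Fin d)} {R h r q c : ℝ} (hu : ‖u‖ = 1)
    (hX : ∀ x ∈ X, ‖x‖ ≤ R ∧ |⟪u, x⟫| ≤ h) (hr : 0 < r) (hrh : r ≤ h) (hR : 0 < R)
    (hq : r / R ≤ q) (hc : 0 < c) (hc2 : c ^ 2 = 1 + 1 / q ^ 2) :
    ∃ B : Matrix (Fin d) (Fin d) ℝ, (B.det ≠ 0 ∧ X ⊆ Ellip B ∧ condNum B ≤ q * (R / r)) ∧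
      ∀ a ∈ Ellip B, ⟪u, a⟫ ≤ c * h := by
  have hh : 0 < h := hr.trans_le hrh
  have hqR : r ≤ q * R := (div_le_iff₀ hR).1 hq
  have hq0 : 0 < q := pos_of_mul_pos_left (hr.trans_le hqR) hR.le
  set m := max h (q * R)
  have hm : 0 < m := hh.trans_le (le_max_left _ _)
  refine ⟨axialMatrix u (c * m)⁻¹ (c * h)⁻¹, ⟨?_, ?_, ?_⟩, fun a ha => ?_⟩
  · exact det_axialMatrix_ne_zero hu (by positivity) (by positivity)
  · refine subset_ellip_axialMatrix hu hX ?_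
    have hRm : R ^ 2 / m ^ 2 ≤ 1 / q ^ 2 := by
      rw [div_le_div_iff₀ (by positivity) (by positivity), one_mul, ← mul_pow]
      exact pow_le_pow_left₀ (by positivity) (by rw [mul_comm]; exact le_max_right _ _) 2
    calc (c * m)⁻¹ ^ 2 * R ^ 2 + (c * h)⁻¹ ^ 2 * h ^ 2 = (R ^ 2 / m ^ 2 + 1) / c ^ 2 := by
          field_simp
      _ ≤ (1 / q ^ 2 + 1) / c ^ 2 := by gcongr
      _ = 1 := by rw [hc2, add_comm, div_self (by positivity)]
  · refine (condNum_axialMatrix_le hu (by positivity)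
      (inv_anti₀ (by positivity) (by gcongr; exact le_max_left _ _))).trans ?_
    rw [inv_div_inv, mul_div_mul_left _ _ hc.ne', div_le_iff₀ hh]
    have hqRr : 1 ≤ q * (R / r) := by rwa [← mul_div_assoc, le_div_iff₀ hr, one_mul]
    refine max_le (by nlinarith) ?_
    calc q * R = q * (R / r) * r := by field_simp
      _ ≤ q * (R / r) * h := by gcongr
  · exact (inner_le_of_mem_ellip_axialMatrix hu (by positivity) ha).trans_eq (inv_inv _)

/-- Every centrally symmetric convex body `X` is well-approximated by the intersection `𝓐_q`
of all origin-centered ellipsoids containing `X` whose aspect ratio is at most `q · κ(X)`: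
`(1/(1+δ)) • 𝓐_q ⊆ X ⊆ 𝓐_q`, where `δ = √(1 + 1/q²) - 1`. -/
theorem stmt1 (d : ℕ) (X : Set (EuclideanSpace ℝ (Fin d)))
    (hXcomp : IsCompact X) (hXconv : Convex ℝ X) (hXint : (interior X).Nonempty)
    (hXsymm : X = -X)
    (r R : ℝ)
    (hr : IsGreatest {s : ℝ | Metric.closedBall (0 : EuclideanSpace ℝ (Fin d)) s ⊆ X} r)
    (hR : IsLeast {s : ℝ | X ⊆ Metric.closedBall (0 : EuclideanSpace ℝ (Fin d)) s} R)
    (q δ : ℝ) (hq : (R / r)⁻¹ ≤ q) (hδ : δ = Real.sqrt (1 + 1 / q ^ 2) - 1)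
    (Aq : Set (EuclideanSpace ℝ (Fin d)))
    (hAq : Aq = ⋂ B ∈ {B : Matrix (Fin d) (Fin d) ℝ |
        B.det ≠ 0 ∧ X ⊆ Ellip B ∧ condNum B ≤ q * (R / r)}, Ellip B) :
    (1 + δ)⁻¹ • Aq ⊆ X ∧ X ⊆ Aq := by
  have hXAq : X ⊆ Aq := hAq ▸ fun x hx => Set.mem_iInter₂.2 fun B hB => hB.2.1 hx
  refine ⟨?_, hXAq⟩
  have h0 : 0 ∈ interior X := zero_mem_interior_of_neg_eq hXconv hXsymm hXint
  obtain ⟨ε, hε, hball⟩ := Metric.nhds_basis_closedBall.mem_iff.1 (mem_interior_iff_mem_nhds.1 h0)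
  have hr0 : 0 < r := hε.trans_le (hr.2 hball)
  have hc2 : (1 + δ) ^ 2 = 1 + 1 / q ^ 2 := by
    rw [hδ, add_sub_cancel, Real.sq_sqrt (by positivity)]
  have hc : 0 < 1 + δ := by rw [hδ, add_sub_cancel]; positivity
  rintro _ ⟨a, ha, rfl⟩
  by_contra hy
  obtain ⟨u, hu, x₀, hx₀, hmax, hlt⟩ :=
    exists_unit_isMaxOn_inner_lt hXcomp hXconv ⟨0, interior_subset h0⟩ hy
  have hslab : ∀ x ∈ X, ‖x‖ ≤ R ∧ |⟪u, x⟫| ≤ ⟪u, x₀⟫ := fun x hx =>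
    ⟨by simpa using hR.1 hx, abs_inner_le_of_isMaxOn hXsymm hmax hx⟩
  have hru : r • u ∈ X := hr.1 (by simp [norm_smul, hu, abs_of_pos hr0])
  have hrh : r ≤ ⟪u, x₀⟫ := by simpa [real_inner_smul_right, hu] using hmax hru
  have hR0 : 0 < R := hr0.trans_le (hrh.trans ((real_inner_le_norm u x₀).trans
    (by simpa [hu] using (hslab x₀ hx₀).1)))
  obtain ⟨B, hB, hBu⟩ := exists_ellip_subset_halfspace hu hslab hr0 hrh hR0
    (by rwa [inv_div] at hq) hc hc2
  have hau := hBu a (Set.mem_iInter₂.1 (hAq ▸ ha) B hB)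
  rw [real_inner_smul_right] at hlt
  linarith [(lt_inv_mul_iff₀ hc).1 hlt]
end
end

section
/- Let B ∈ ℝ^{d×d} be a matrix whose operator norm is at most 1 (equivalently, all singular values of B are at most 1), and let v ∈ ℝ^d with ‖v‖ ≥ 1 and ‖B v‖ ≤ 1. Then |det B| ≤ 1/‖v‖. -/
/-!
For a contraction `T` of a finite-dimensional real inner product space, let `μᵢ` be the eigenvalues
of the positive operator `T† T` with orthonormal eigenbasis `bᵢ`. Then `μᵢ = ‖T bᵢ‖² ∈ [0, 1]`, so
`(det T)² = ∏ μᵢ` is at most every `μᵢ`, hence at most the Rayleigh quotient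
`‖T x‖² / ‖x‖² = ∑ μᵢ ⟪bᵢ, x⟫² / ∑ ⟪bᵢ, x⟫²`. Thus `|det T| ‖x‖ ≤ ‖T x‖`, and `‖B v‖ ≤ 1` finishes.
-/

noncomputable section

open scoped Pointwise

/-- Squared Frobenius norm. -/
def frobSq {d : ℕ} (A : Matrix (Fin d) (Fin d) ℝ) : ℝ :=
  ∑ i, ∑ j, (A i j) ^ 2

/-- Minimum-volume-ellipsoid update matrix `Â` for `(A, x)`. -/
def updateMatrix {d : ℕ} (A : Matrix (Fin d) (Fin d) ℝ) (x : EuclideanSpace ℝ (Fin d)) :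
    Matrix (Fin d) (Fin d) ℝ :=
  1 - ((1 - (‖mulVecE A x‖)⁻¹) / ‖mulVecE A x‖ ^ 2) •
        Matrix.vecMulVec (mulVecE A x) (mulVecE A x)

/-- Potential function `Φ_J(A)`. -/
def potential {d : ℕ} (J A : Matrix (Fin d) (Fin d) ℝ) : ℝ :=
  frobSq (J * A⁻¹) - 2 * Real.log |(J * A⁻¹).det|

open Module
open scoped InnerProductSpace

namespace LinearMap

variable {E : Type*} [NormedAddCommGroup E] [InnerProductSpace ℝ E] [FiniteDimensional ℝ E]

theorem IsSymmetric.mul_norm_sq_le_inner_map_self {T : E →ₗ[ℝ] E} (hT : T.IsSymmetric) {n : ℕ}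
    (hn : finrank ℝ E = n) {c : ℝ} (hc : ∀ i, c ≤ hT.eigenvalues hn i) (x : E) :
    c * ‖x‖ ^ 2 ≤ ⟪T x, x⟫_ℝ := by
  set b := hT.eigenvectorBasis hn
  have hnorm : ‖x‖ ^ 2 = ∑ i, b.repr x i ^ 2 := by
    simp [← b.sum_sq_norm_inner_right x, b.repr_apply_apply]
  have hinner : ⟪T x, x⟫_ℝ = ∑ i, hT.eigenvalues hn i * b.repr x i ^ 2 := by
    rw [← b.repr.inner_map_map, EuclideanSpace.inner_eq_star_dotProduct]
    refine Finset.sum_congr rfl fun i _ => ?_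
    simp only [b, star_trivial, hT.eigenvectorBasis_apply_self_apply, RCLike.ofReal_real_eq_id,
      id_eq]
    ring
  rw [hnorm, hinner, Finset.mul_sum]
  exact Finset.sum_le_sum fun i _ => mul_le_mul_of_nonneg_right (hc i) (sq_nonneg _)

theorem abs_det_mul_norm_le_norm_apply {T : E →ₗ[ℝ] E} (hT : ∀ y, ‖T y‖ ≤ ‖y‖) (x : E) :
    |T.det| * ‖x‖ ≤ ‖T x‖ := by
  have hS : (T.adjoint * T).IsSymmetric := T.isSymmetric_adjoint_mul_self
  have hquad : ∀ y, ⟪(T.adjoint * T) y, y⟫_ℝ = ‖T y‖ ^ 2 := fun y => by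
    rw [Module.End.mul_apply, adjoint_inner_left, real_inner_self_eq_norm_sq]
  set μ := hS.eigenvalues rfl
  have hμ : ∀ i, μ i = ‖T (hS.eigenvectorBasis rfl i)‖ ^ 2 := fun i => by
    rw [← hquad, hS.apply_eigenvectorBasis, real_inner_smul_left, real_inner_self_eq_norm_sq,
      (hS.eigenvectorBasis rfl).orthonormal.1 i]
    simp [μ]
  have hμ_mem : ∀ i, μ i ∈ Set.Icc (0 : ℝ) 1 := fun i => by
    have := hT (hS.eigenvectorBasis rfl i)
    rw [(hS.eigenvectorBasis rfl).orthonormal.1 i] at this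
    exact ⟨hμ i ▸ sq_nonneg _, hμ i ▸ pow_le_one₀ (norm_nonneg _) this⟩
  have hdet : |T.det| ^ 2 = ∏ i, μ i := by
    rw [← normDet_eq_abs_det]
    simpa using (normDet_sq T).trans (hS.det_eq_prod_eigenvalues rfl)
  have hdet_le : ∀ i, |T.det| ^ 2 ≤ μ i := fun i => by
    simpa [hdet] using Finset.prod_le_prod_of_subset_of_le_one (Finset.subset_univ {i})
      (fun j _ => (hμ_mem j).1) (fun j _ _ => (hμ_mem j).2)
  have key := hS.mul_norm_sq_le_inner_map_self rfl hdet_le x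
  rw [hquad, ← mul_pow] at key
  exact (pow_le_pow_iff_left₀ (by positivity) (norm_nonneg _) two_ne_zero).1 key

end LinearMap

theorem abs_det_mul_norm_le_norm_mulVecE {d : ℕ} {B : Matrix (Fin d) (Fin d) ℝ} (hB : sMax B ≤ 1)
    (x : EuclideanSpace ℝ (Fin d)) : |B.det| * ‖x‖ ≤ ‖mulVecE B x‖ := by
  have hdet : LinearMap.det (Matrix.toEuclideanLin B) = B.det := by
    rw [Matrix.toEuclideanLin_eq_toLin_orthonormal, LinearMap.det_toLin]
  have hcontr : ∀ y, ‖Matrix.toEuclideanLin B y‖ ≤ ‖y‖ := fun y =>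
    ((Matrix.toEuclideanCLM (𝕜 := ℝ) B).le_of_opNorm_le hB y).trans_eq (one_mul _)
  rw [← hdet]
  exact LinearMap.abs_det_mul_norm_le_norm_apply hcontr x

open Matrix in
/-- If all singular values of `B` are at most `1`, `‖v‖ ≥ 1` and `‖B v‖ ≤ 1`, then
`|det B| ≤ 1 / ‖v‖`. -/
theorem stmt3 (d : ℕ) (B : Matrix (Fin d) (Fin d) ℝ) (hB : sMax B ≤ 1)
    (v : EuclideanSpace ℝ (Fin d)) (hv : 1 ≤ ‖v‖) (hBv : ‖mulVecE B v‖ ≤ 1) :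
    |B.det| ≤ 1 / ‖v‖ := by
  rw [le_div_iff₀ (by linarith)]
  exact (abs_det_mul_norm_le_norm_mulVecE hB v).trans hBv
end
end

section
/- Let A, J ∈ ℝ^{d×d} be nonsingular and x ∈ ℝ^d with ‖A x‖ > 1, and let Â be the update matrix for (A, x). Then ‖J·(ÂA)^{-1}‖_F² − ‖J·A^{-1}‖_F² ≤ 2 log(‖A x‖) · ‖J x‖². -/
noncomputable section

open scoped Pointwise

/-! `Â` is a rank-one perturbation of the identity, so by Sherman–Morrison
`J (ÂA)⁻¹ = J A⁻¹ + c (J x)(A x)ᵀ` with `c = (r - 1) / r²`, `r = ‖A x‖`. Since `J A⁻¹` maps `A x`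
to `J x`, expanding the Frobenius norm of this rank-one update gives an increase of exactly
`(2c + c² r²) ‖J x‖² = (1 - r⁻²) ‖J x‖²`, and `1 - r⁻² ≤ log r² = 2 log r`. -/

open Matrix

lemma sq_norm_mulVecE {d : ℕ} (A : Matrix (Fin d) (Fin d) ℝ) (x : EuclideanSpace ℝ (Fin d)) :
    ‖mulVecE A x‖ ^ 2 = (A *ᵥ x) ⬝ᵥ (A *ᵥ x) := by
  rw [EuclideanSpace.real_norm_sq_eq]
  simp only [dotProduct, sq]
  rfl

lemma Matrix.one_sub_smul_vecMulVec_self_mul_one_add_smul {n R : Type*} [Fintype n]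
    [DecidableEq n] [CommRing R] (v : n → R) {a b : R} (h : a + a * b * (v ⬝ᵥ v) = b) :
    (1 - a • vecMulVec v v) * (1 + b • vecMulVec v v) = 1 := by
  have hsq : vecMulVec v v * vecMulVec v v = (v ⬝ᵥ v) • vecMulVec v v := by
    rw [vecMulVec_mul_vecMulVec, vecMulVec_smul]
  have hexpand : (1 - a • vecMulVec v v) * (1 + b • vecMulVec v v) =
      1 + (b - a - a * b * (v ⬝ᵥ v)) • vecMulVec v v := by
    simp only [sub_mul, mul_add, one_mul, mul_one, smul_mul_assoc, mul_smul_comm, smul_smul, hsq]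
    module
  rw [hexpand, show b - a - a * b * (v ⬝ᵥ v) = 0 by linear_combination -h, zero_smul, add_zero]

lemma updateMatrix_inv {d : ℕ} (A : Matrix (Fin d) (Fin d) ℝ) (x : EuclideanSpace ℝ (Fin d))
    (hAx : ‖mulVecE A x‖ ≠ 0) :
    (updateMatrix A x)⁻¹ = 1 + ((‖mulVecE A x‖ - 1) / ‖mulVecE A x‖ ^ 2) •
      vecMulVec (A *ᵥ x) (A *ᵥ x) := by
  refine inv_eq_right_inv (one_sub_smul_vecMulVec_self_mul_one_add_smul (A *ᵥ x) ?_)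
  rw [← sq_norm_mulVecE]
  field_simp
  ring

lemma frobSq_add_smul_vecMulVec {d : ℕ} (M : Matrix (Fin d) (Fin d) ℝ) (c : ℝ)
    (u v : Fin d → ℝ) :
    frobSq (M + c • vecMulVec u v) =
      frobSq M + 2 * c * (u ⬝ᵥ M *ᵥ v) + c ^ 2 * (u ⬝ᵥ u) * (v ⬝ᵥ v) := by
  simp only [frobSq, Matrix.add_apply, Matrix.smul_apply, vecMulVec_apply, smul_eq_mul, add_sq,
    Finset.sum_add_distrib, dotProduct, mulVec, Finset.mul_sum, Finset.sum_mul]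
  congr 1
  · congr 1
    refine Finset.sum_congr rfl fun i _ => Finset.sum_congr rfl fun j _ => ?_
    ring
  · rw [Finset.sum_comm]
    refine Finset.sum_congr rfl fun i _ => Finset.sum_congr rfl fun j _ => ?_
    ring

lemma one_sub_inv_sq_le_two_mul_log {r : ℝ} (hr : 0 < r) : 1 - (r ^ 2)⁻¹ ≤ 2 * Real.log r := by
  simpa [Real.log_pow] using Real.one_sub_inv_le_log_of_pos (pow_pos hr 2)

theorem stmt8_general (d : ℕ) (A J : Matrix (Fin d) (Fin d) ℝ)
    (hA : A.det ≠ 0)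
    (x : EuclideanSpace ℝ (Fin d)) (hx : 1 < ‖mulVecE A x‖) :
    frobSq (J * (updateMatrix A x * A)⁻¹) - frobSq (J * A⁻¹) ≤
      2 * Real.log ‖mulVecE A x‖ * ‖mulVecE J x‖ ^ 2 := by
  set r := ‖mulVecE A x‖
  set c := (r - 1) / r ^ 2
  have hr : 0 < r := one_pos.trans hx
  have hJA : (J * A⁻¹) *ᵥ (A *ᵥ x) = J *ᵥ x := by
    rw [mulVec_mulVec, mul_assoc, nonsing_inv_mul A (isUnit_iff_ne_zero.mpr hA), mul_one]
  have hupdate : J * (updateMatrix A x * A)⁻¹ = J * A⁻¹ + c • vecMulVec (J *ᵥ x) (A *ᵥ x) := by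
    rw [Matrix.mul_inv_rev, updateMatrix_inv A x hr.ne', ← mul_assoc, mul_add, mul_one,
      Matrix.mul_smul, mul_vecMulVec, hJA]
  have hcoeff : 2 * c + c ^ 2 * r ^ 2 = 1 - (r ^ 2)⁻¹ := by
    simp only [c]
    field_simp
    ring
  rw [hupdate, frobSq_add_smul_vecMulVec, hJA, ← sq_norm_mulVecE, ← sq_norm_mulVecE]
  have hgain := mul_le_mul_of_nonneg_right (hcoeff.trans_le (one_sub_inv_sq_le_two_mul_log hr))
    (sq_nonneg ‖mulVecE J x‖)
  linarith

/-- `‖J (ÂA)⁻¹‖_F² − ‖J A⁻¹‖_F² ≤ 2 log ‖A x‖ · ‖J x‖²`. -/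
theorem stmt8 (d : ℕ) (A J : Matrix (Fin d) (Fin d) ℝ)
    (hA : A.det ≠ 0) (hJ : J.det ≠ 0)
    (x : EuclideanSpace ℝ (Fin d)) (hx : 1 < ‖mulVecE A x‖) :
    frobSq (J * (updateMatrix A x * A)⁻¹) - frobSq (J * A⁻¹) ≤
      2 * Real.log ‖mulVecE A x‖ * ‖mulVecE J x‖ ^ 2 :=
  stmt8_general d A J hA x hx
end
end
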